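/- Let α ∈ ℂ. Define C : ℕ × ℕ → ℂ by C_{k,j} = Σ_{m=0}^{min(k,j)} conj(α)^{k−m} · α^{j−m}. Then for all k, j ∈ ℕ: (1 + |α|²)·C_{k,j} − α·C_{k+1,j} − (conj(α)·C_{k−1,j} if k ≥ 1, else 0) equals 1 if k = j and 0 otherwise. In other words, the infinite tridiagonal Toeplitz matrix B with entries B_{k,l} = 1 + |α|² if l = k, B_{k,l} = −conj(α) if l = k − 1, B_{k,l} = −α if l = k + 1, and 0 otherwise, satisfies B·C = I entrywise. -/

import Mathlib

/-!
With `c k j = ∑_{m ≤ min k j} a^(k-m) b^(j-m)`, peeling off the term `m = k + 1` gives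
`c (k+1) j = a c k j + [k < j] b^(j-k-1)`, so the difference `d k = c k j - a c (k-1) j` is
`[k ≤ j] b^(j-k)`. For `a = conj α`, `b = α` the tridiagonal operator applied to `c` is
`d k - b d (k+1)` (the diagonal `1 + |α|²` is `1 + b a`), and
`[k ≤ j] b^(j-k) - b [k < j] b^(j-k-1) = δ_{kj}`.
-/

open Finset

section GeomMinSum

variable {R : Type*} [CommRing R] (a b : R)

def geomMinSum (k j : ℕ) : R :=
  ∑ m ∈ range (min k j + 1), a ^ (k - m) * b ^ (j - m)

theorem geomMinSum_zero_left (j : ℕ) : geomMinSum a b 0 j = b ^ j := by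
  simp [geomMinSum]

theorem geomMinSum_succ_left (k j : ℕ) :
    geomMinSum a b (k + 1) j
      = a * geomMinSum a b k j + if k + 1 ≤ j then b ^ (j - (k + 1)) else 0 := by
  have hterm : ∀ m ≤ k, a ^ (k + 1 - m) * b ^ (j - m) = a * (a ^ (k - m) * b ^ (j - m)) :=
    fun m hm => by rw [Nat.sub_add_comm hm, pow_succ', mul_assoc]
  have hsum : ∀ n ≤ k, ∑ m ∈ range (n + 1), a ^ (k + 1 - m) * b ^ (j - m)
      = a * ∑ m ∈ range (n + 1), a ^ (k - m) * b ^ (j - m) := fun n hn => by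
    rw [mul_sum]
    exact sum_congr rfl fun m hm => hterm m (by have := mem_range.mp hm; omega)
  unfold geomMinSum
  split_ifs with h
  · rw [min_eq_left h, sum_range_succ, min_eq_left (Nat.le_of_succ_le h), hsum k le_rfl]
    simp
  · rw [show min (k + 1) j = min k j by omega, hsum _ (min_le_left k j), add_zero]

theorem geomMinSum_sub_mul_pred (k j : ℕ) :
    geomMinSum a b k j - (if 1 ≤ k then a * geomMinSum a b (k - 1) j else 0)
      = if k ≤ j then b ^ (j - k) else 0 := by
  cases k with
  | zero => simp [geomMinSum_zero_left]
  | succ k =>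
    rw [if_pos (Nat.le_add_left 1 k), Nat.add_sub_cancel, geomMinSum_succ_left, add_sub_cancel_left]

theorem ite_pow_sub_mul_ite_pow (k j : ℕ) :
    (if k ≤ j then b ^ (j - k) else 0) - b * (if k + 1 ≤ j then b ^ (j - (k + 1)) else 0)
      = if k = j then 1 else 0 := by
  rcases lt_trichotomy k j with h | rfl | h
  · rw [if_pos h.le, if_pos (Nat.succ_le_of_lt h), if_neg h.ne, ← pow_succ',
      show j - (k + 1) + 1 = j - k by omega, sub_self]
  · simp
  · rw [if_neg (by omega), if_neg (by omega), if_neg h.ne', mul_zero, sub_zero]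

theorem one_add_mul_geomMinSum_sub (k j : ℕ) :
    (1 + b * a) * geomMinSum a b k j - b * geomMinSum a b (k + 1) j
      - (if 1 ≤ k then a * geomMinSum a b (k - 1) j else 0)
      = if k = j then 1 else 0 := by
  have hsucc := geomMinSum_sub_mul_pred a b (k + 1) j
  rw [if_pos (Nat.le_add_left 1 k), Nat.add_sub_cancel] at hsucc
  linear_combination geomMinSum_sub_mul_pred a b k j - b * hsucc + ite_pow_sub_mul_ite_pow b k j

end GeomMinSum

open Finset in
/-- For `α : ℂ`, the matrix `C_{k,j} = ∑_{m=0}^{min k j} conj(α)^{k-m} * α^{j-m}`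
is a right inverse of the tridiagonal Toeplitz matrix `B` with diagonal `1 + |α|²`,
subdiagonal `-conj α` and superdiagonal `-α`: entrywise,
`(1 + |α|²) C_{k,j} - α C_{k+1,j} - conj α C_{k-1,j} = δ_{k,j}`
(the last term being absent when `k = 0`). -/
theorem tridiagonal_inverse (α : ℂ) (C : ℕ → ℕ → ℂ)
    (hC : ∀ k j : ℕ, C k j =
      ∑ m ∈ range (min k j + 1), ((starRingEnd ℂ) α) ^ (k - m) * α ^ (j - m)) :
    ∀ k j : ℕ,
      (1 + ((‖α‖ : ℝ) : ℂ) ^ 2) * C k j - α * C (k + 1) j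
        - (if 1 ≤ k then (starRingEnd ℂ) α * C (k - 1) j else 0)
      = if k = j then 1 else 0 := by
  have hC_eq : C = geomMinSum ((starRingEnd ℂ) α) α := funext₂ hC
  have hnorm : ((‖α‖ : ℝ) : ℂ) ^ 2 = α * (starRingEnd ℂ) α := by
    rw [← Complex.ofReal_pow, Complex.sq_norm, Complex.mul_conj]
  intro k j
  rw [hC_eq, hnorm]
  exact one_add_mul_geomMinSum_sub _ _ k j
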